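/- arXiv:2104.00081 — 2 statements merged into one kernel-verified Lean document; each statement's English description precedes it below -/
import Mathlib

section
/- Let μ be an uncountable regular cardinal and let ζ be an ordinal with μ ≤ ζ and |ζ| = μ. Then for any two bijections f and g from the set of ordinals below μ onto the set of ordinals below ζ, the set {γ < μ : otp(f '' γ) = otp(g '' γ)} contains a club in μ. -/
universe u

/-- `C` is a club in the ordinal `μ`: a set of ordinals below `μ` that is
unbounded in `μ` and closed (every limit `δ < μ` in which `C` is unbounded
belongs to `C`). -/
def IsClubIn (C : Set Ordinal.{u}) (μ : Ordinal.{u}) : Prop :=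
  C ⊆ Set.Iio μ ∧
  (∀ α < μ, ∃ γ ∈ C, α ≤ γ) ∧
  (∀ δ < μ, Order.IsSuccLimit δ → (∀ α < δ, ∃ γ ∈ C, α ≤ γ ∧ γ < δ) → δ ∈ C)

/-- The order type of a set `S` of ordinals: the unique ordinal order-isomorphic
to `S` (with the order inherited from the ordinals), whenever `S` is set-sized. -/
noncomputable def otp (S : Set Ordinal.{u}) : Ordinal.{u} :=
  sInf {o : Ordinal.{u} | Ordinal.lift.{u + 1} o =
    Ordinal.type (Subrel ((· < ·) : Ordinal.{u} → Ordinal.{u} → Prop) (· ∈ S))}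

/-! The set of `γ < μ` with `f '' γ = g '' γ` is already a club, and on it the two order types
agree trivially. It is unbounded because, by regularity, every `β < μ` has some `γ < μ` with
`f '' β ⊆ g '' γ` and `g '' β ⊆ f '' γ`; iterating this `ω` times and taking the supremum, which
stays below `μ` since `cf μ > ω`, gives a point of the set. Closure is immediate. -/

open Ordinal Cardinal Set

section ImageIio

variable {X : Type*} {f g : Ordinal.{u} → X}

lemma image_Iio_subset_image_Iio_of_forall_lt {δ : Ordinal.{u}}
    (h : ∀ x < δ, ∃ β γ, x < β ∧ γ ≤ δ ∧ f '' Iio β ⊆ g '' Iio γ) :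
    f '' Iio δ ⊆ g '' Iio δ := by
  rintro _ ⟨x, hx, rfl⟩
  obtain ⟨β, γ, hxβ, hγδ, hsub⟩ := h x hx
  exact image_mono (Iio_subset_Iio hγδ) (hsub ⟨x, hxβ, rfl⟩)

lemma image_Iio_eq_of_forall_lt {δ : Ordinal.{u}}
    (h : ∀ x < δ, ∃ γ, x < γ ∧ γ ≤ δ ∧ f '' Iio γ = g '' Iio γ) :
    f '' Iio δ = g '' Iio δ := by
  refine (image_Iio_subset_image_Iio_of_forall_lt fun x hx => ?_).antisymm
    (image_Iio_subset_image_Iio_of_forall_lt fun x hx => ?_)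
  · obtain ⟨γ, hxγ, hγδ, heq⟩ := h x hx
    exact ⟨γ, γ, hxγ, hγδ, heq.subset⟩
  · obtain ⟨γ, hxγ, hγδ, heq⟩ := h x hx
    exact ⟨γ, γ, hxγ, hγδ, heq.symm.subset⟩

variable {μ : Cardinal.{u}}

lemma exists_image_Iio_subset_image_Iio (hμ : μ.IsRegular) {s : Set X}
    (hf : MapsTo f (Iio μ.ord) s) (hg : SurjOn g (Iio μ.ord) s) {β : Ordinal.{u}}
    (hβ : β < μ.ord) : ∃ γ < μ.ord, f '' Iio β ⊆ g '' Iio γ := by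
  have hpre : ∀ a : Iio β, ∃ η < μ.ord, g η = f a := fun a => hg (hf (a.2.trans hβ))
  choose η hη_lt hη using hpre
  refine ⟨⨆ a, η a + 1, lift_iSup_add_one_lt_of_lt_cof ?_ hη_lt, ?_⟩
  · rw [Cardinal.mk_Iio_ordinal, ← lift_cof, Cardinal.lift_lift, Cardinal.lift_lt, hμ.cof_ord]
    exact lt_ord.1 hβ
  · rintro _ ⟨a, ha, rfl⟩
    exact ⟨η ⟨a, ha⟩, (lt_add_one _).trans_le (Ordinal.le_iSup (fun a => η a + 1) _), hη _⟩

variable {s : Set X}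
  (hf : MapsTo f (Iio μ.ord) s) (hf' : SurjOn f (Iio μ.ord) s)
  (hg : MapsTo g (Iio μ.ord) s) (hg' : SurjOn g (Iio μ.ord) s)
include hf hf' hg hg'

lemma exists_mutual_image_Iio_subset (hμ : μ.IsRegular) {β : Ordinal.{u}} (hβ : β < μ.ord) :
    ∃ γ < μ.ord, f '' Iio β ⊆ g '' Iio γ ∧ g '' Iio β ⊆ f '' Iio γ := by
  obtain ⟨γ₁, hγ₁, h₁⟩ := exists_image_Iio_subset_image_Iio hμ hf hg' hβ
  obtain ⟨γ₂, hγ₂, h₂⟩ := exists_image_Iio_subset_image_Iio hμ hg hf' hβ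
  exact ⟨max γ₁ γ₂, max_lt hγ₁ hγ₂, h₁.trans (image_mono (Iio_subset_Iio (le_max_left _ _))),
    h₂.trans (image_mono (Iio_subset_Iio (le_max_right _ _)))⟩

lemma exists_le_image_Iio_eq (hμ : μ.IsRegular) (hμ₀ : ℵ₀ < μ) {α : Ordinal.{u}}
    (hα : α < μ.ord) : ∃ γ, α ≤ γ ∧ γ < μ.ord ∧ f '' Iio γ = g '' Iio γ := by
  choose! next next_lt next_fg next_gf using
    fun β (hβ : β < μ.ord) => exists_mutual_image_Iio_subset hf hf' hg hg' hμ hβ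
  have step (n : ℕ) : next^[n + 1] α = next (next^[n] α) := Function.iterate_succ_apply' next n α
  have iterate_lt (n : ℕ) : next^[n] α < μ.ord := by
    induction n with
    | zero => exact hα
    | succ n ih => exact step n ▸ next_lt _ ih
  refine ⟨nfp next α, le_nfp next α, nfp_lt_ord_of_isRegular hμ hμ₀.ne' next_lt hα, ?_⟩
  refine (image_Iio_subset_image_Iio_of_forall_lt fun x hx => ?_).antisymm
    (image_Iio_subset_image_Iio_of_forall_lt fun x hx => ?_)
  · obtain ⟨n, hn⟩ := lt_nfp_iff.1 hx
    exact ⟨_, _, hn, iterate_le_nfp next α (n + 1), step n ▸ next_fg _ (iterate_lt n)⟩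
  · obtain ⟨n, hn⟩ := lt_nfp_iff.1 hx
    exact ⟨_, _, hn, iterate_le_nfp next α (n + 1), step n ▸ next_gf _ (iterate_lt n)⟩

lemma isClubIn_setOf_image_Iio_eq (hμ : μ.IsRegular) (hμ₀ : ℵ₀ < μ) :
    IsClubIn {γ | γ < μ.ord ∧ f '' Iio γ = g '' Iio γ} μ.ord := by
  refine ⟨fun γ hγ => hγ.1, fun α hα => ?_, fun δ hδ hlim hcof => ⟨hδ, ?_⟩⟩
  · obtain ⟨γ, hαγ, hγ, heq⟩ := exists_le_image_Iio_eq hf hf' hg hg' hμ hμ₀ hα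
    exact ⟨γ, ⟨hγ, heq⟩, hαγ⟩
  · refine image_Iio_eq_of_forall_lt fun x hx => ?_
    obtain ⟨γ, ⟨-, heq⟩, hxγ, hγδ⟩ := hcof _ (hlim.succ_lt hx)
    exact ⟨γ, Order.succ_le_iff.1 hxγ, hγδ.le, heq⟩

end ImageIio

theorem stmt_1_general (μ : Cardinal) (hreg : μ.IsRegular) (hunc : Cardinal.aleph0 < μ)
    (ζ : Ordinal)
    (f g : Ordinal → Ordinal)
    (hf : Set.BijOn f (Set.Iio μ.ord) (Set.Iio ζ))
    (hg : Set.BijOn g (Set.Iio μ.ord) (Set.Iio ζ)) :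
    ∃ C, IsClubIn C μ.ord ∧
      ∀ γ ∈ C, otp (f '' Set.Iio γ) = otp (g '' Set.Iio γ) :=
  ⟨_, isClubIn_setOf_image_Iio_eq hf.mapsTo hf.surjOn hg.mapsTo hg.surjOn hreg hunc,
    fun _ hγ => by rw [hγ.2]⟩

theorem stmt_1 (μ : Cardinal) (hreg : μ.IsRegular) (hunc : Cardinal.aleph0 < μ)
    (ζ : Ordinal) (hμζ : μ.ord ≤ ζ) (hcard : ζ.card = μ)
    (f g : Ordinal → Ordinal)
    (hf : Set.BijOn f (Set.Iio μ.ord) (Set.Iio ζ))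
    (hg : Set.BijOn g (Set.Iio μ.ord) (Set.Iio ζ)) :
    ∃ C, IsClubIn C μ.ord ∧
      ∀ γ ∈ C, otp (f '' Set.Iio γ) = otp (g '' Set.Iio γ) :=
  stmt_1_general μ hreg hunc ζ f g hf hg
end

section
/- Let μ be an uncountable regular cardinal, let ζ be an ordinal with μ ≤ ζ and |ζ| = μ, and let A be a set of ordinals. Suppose there is a bijection f₀ from the ordinals below μ onto the ordinals below ζ such that: (ζ ∈ A if and only if there is a club C in μ with otp(f₀ '' γ) ∈ A for every γ ∈ C) and (ζ ∉ A if and only if there is a club C in μ with otp(f₀ '' γ) ∉ A for every γ ∈ C). Then the following are equivalent: (1) ζ ∈ A; (2) there exist a bijection f from the ordinals below μ onto the ordinals below ζ and a club C in μ such that otp(f '' γ) ∈ A for every γ ∈ C; (3) for every bijection f from the ordinals below μ onto the ordinals below ζ there exists a club C in μ such that otp(f '' γ) ∈ A for every γ ∈ C; (4) for every bijection f from the ordinals below μ onto the ordinals below ζ and every club C in μ, there exists γ ∈ C with otp(f '' γ) ∈ A (i.e. C is not contained in {γ < μ : otp(f '' γ) ∉ A}). -/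
universe u

/-!
Any two bijections `f g` from `μ` onto `ζ` satisfy `f '' γ = g '' γ` for club many `γ < μ`,
namely for the limit closure points of `ξ ↦ max (g⁻¹ (f ξ)) (f⁻¹ (g ξ))`; closure points are
reached as suprema of `ω`-iterations, which stay below `μ` because `μ` is regular and
uncountable. As clubs in `μ` are closed under finite intersections and nonempty, whether
`otp (f '' γ) ∈ A` holds on a club does not depend on `f`, and it cannot hold on one club while
failing on another. The two hypotheses on `f₀` tie this dichotomy to `ζ ∈ A`.
-/

universe v

open Ordinal Set Cardinal Order Function

def closurePoints (μ : Ordinal.{u}) (b : Ordinal.{u} → Ordinal.{u}) : Set Ordinal.{u} :=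
  {δ | δ < μ ∧ IsSuccLimit δ ∧ ∀ β < δ, b β < δ}

theorem closurePoints_anti {μ : Ordinal.{u}} {b b' : Ordinal.{u} → Ordinal.{u}}
    (h : ∀ β, b β ≤ b' β) : closurePoints μ b' ⊆ closurePoints μ b :=
  fun _ ⟨hδ, hlim, hcl⟩ ↦ ⟨hδ, hlim, fun β hβ ↦ (h β).trans_lt (hcl β hβ)⟩

theorem IsClubIn.nonempty {C : Set Ordinal.{u}} {μ : Ordinal.{u}} (hC : IsClubIn C μ)
    (hμ : 0 < μ) : C.Nonempty :=
  let ⟨γ, hγ, _⟩ := hC.2.1 0 hμ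
  ⟨γ, hγ⟩

theorem IsClubIn.exists_closurePoints_subset {C : Set Ordinal.{u}} {μ : Ordinal.{u}}
    (hC : IsClubIn C μ) (hμ : IsSuccLimit μ) :
    ∃ b : Ordinal.{u} → Ordinal.{u}, (∀ α < μ, b α < μ) ∧ closurePoints μ b ⊆ C := by
  have hnext : ∀ α < μ, ∃ γ ∈ C, α < γ := fun α hα ↦
    let ⟨γ, hγ, hle⟩ := hC.2.1 (succ α) (hμ.succ_lt hα)
    ⟨γ, hγ, (lt_succ α).trans_le hle⟩
  choose! b hbC hαb using hnext
  refine ⟨b, fun α hα ↦ hC.1 (hbC α hα), fun δ ⟨hδ, hlim, hcl⟩ ↦ ?_⟩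
  exact hC.2.2 δ hδ hlim fun α hα ↦
    ⟨b α, hbC α (hα.trans hδ), (hαb α (hα.trans hδ)).le, hcl α hα⟩

theorem isClubIn_closurePoints_of_forall_lt {μ : Ordinal.{u}} {b : Ordinal.{u} → Ordinal.{u}}
    (hub : ∀ α < μ, ∃ δ ∈ closurePoints μ b, α < δ) : IsClubIn (closurePoints μ b) μ := by
  refine ⟨fun δ hδ ↦ hδ.1, fun α hα ↦ (hub α hα).imp fun δ h ↦ ⟨h.1, h.2.le⟩, ?_⟩
  intro δ hδ hlim hcof
  refine ⟨hδ, hlim, fun β hβ ↦ ?_⟩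
  obtain ⟨γ, ⟨-, -, hγ⟩, hβγ, hγδ⟩ := hcof (succ β) (hlim.succ_lt hβ)
  exact (hγ β ((lt_succ β).trans_le hβγ)).trans hγδ

theorem image_subset_image_of_invFunOn_mem {α β : Type*} [Nonempty α] {f g : α → β}
    {s S : Set α} {t : Set β} (hf : MapsTo f S t) (hg : SurjOn g s t)
    (h : ∀ x ∈ S, invFunOn g s (f x) ∈ S) : f '' S ⊆ g '' S := by
  rintro _ ⟨x, hx, rfl⟩
  exact ⟨_, h x hx, invFunOn_eq (hg (hf hx))⟩

section Regular

variable {μ : Cardinal.{u}}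

theorem iSup_Iio_lt_ord_of_isRegular (hreg : μ.IsRegular) {x : Ordinal.{u}} (hx : x < μ.ord)
    {b : Ordinal.{u} → Ordinal.{u}} (hb : ∀ ξ < x, b ξ < μ.ord) :
    ⨆ ξ : Iio x, b ξ < μ.ord := by
  refine lift_iSup_lt_of_lt_cof ?_ fun ξ ↦ hb ξ.1 ξ.2
  rwa [Cardinal.mk_Iio_ordinal, Cardinal.lift_lift, ← lift_cof, Cardinal.lift_lt, hreg.cof_ord,
    ← lt_ord]

theorem exists_mem_closurePoints_gt (hreg : μ.IsRegular) (hunc : ℵ₀ < μ)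
    {b : Ordinal.{u} → Ordinal.{u}} (hb : ∀ α < μ.ord, b α < μ.ord) {α : Ordinal.{u}}
    (hα : α < μ.ord) : ∃ δ ∈ closurePoints μ.ord b, α < δ := by
  set N : Ordinal.{u} → Ordinal.{u} := fun x ↦ succ (max x (⨆ ξ : Iio x, b ξ))
  have hN : ∀ x < μ.ord, N x < μ.ord := fun x hx ↦ (isSuccLimit_ord hreg.aleph0_le).succ_lt
    (max_lt hx (iSup_Iio_lt_ord_of_isRegular hreg hx fun ξ hξ ↦ hb ξ (hξ.trans hx)))
  have hxN : ∀ x, x < N x := fun x ↦ (le_max_left _ _).trans_lt (lt_succ _)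
  have hbN : ∀ x, ∀ β < x, b β < N x := fun x β hβ ↦
    ((Ordinal.le_iSup (fun ξ : Iio x ↦ b ξ) ⟨β, hβ⟩).trans (le_max_right _ _)).trans_lt (lt_succ _)
  have hstep : ∀ β < nfp N α, ∃ x, β < x ∧ N x ≤ nfp N α := fun β hβ ↦
    let ⟨n, hn⟩ := lt_nfp_iff.1 hβ
    ⟨_, hn, by simpa only [iterate_succ_apply'] using iterate_le_nfp N α (n + 1)⟩
  have hαδ : α < nfp N α := (hxN α).trans_le (iterate_le_nfp N α 1)
  refine ⟨nfp N α, ⟨nfp_lt_ord_of_isRegular hreg hunc.ne' hN hα, ?_, ?_⟩, hαδ⟩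
  · refine Ordinal.isSuccLimit_iff.2 ⟨hαδ.ne_bot, isSuccPrelimit_of_succ_lt fun β hβ ↦ ?_⟩
    obtain ⟨x, hβx, hx⟩ := hstep β hβ
    exact (succ_le_of_lt hβx).trans_lt ((hxN x).trans_le hx)
  · intro β hβ
    obtain ⟨x, hβx, hx⟩ := hstep β hβ
    exact (hbN x β hβx).trans_le hx

theorem isClubIn_closurePoints (hreg : μ.IsRegular) (hunc : ℵ₀ < μ)
    {b : Ordinal.{u} → Ordinal.{u}} (hb : ∀ α < μ.ord, b α < μ.ord) :
    IsClubIn (closurePoints μ.ord b) μ.ord :=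
  isClubIn_closurePoints_of_forall_lt fun _ hα ↦ exists_mem_closurePoints_gt hreg hunc hb hα

theorem IsClubIn.inter (hreg : μ.IsRegular) (hunc : ℵ₀ < μ) {C C' : Set Ordinal.{u}}
    (hC : IsClubIn C μ.ord) (hC' : IsClubIn C' μ.ord) : IsClubIn (C ∩ C') μ.ord := by
  have hlim := isSuccLimit_ord hreg.aleph0_le
  obtain ⟨b, hb, hbC⟩ := hC.exists_closurePoints_subset hlim
  obtain ⟨b', hb', hbC'⟩ := hC'.exists_closurePoints_subset hlim
  have hsub : closurePoints μ.ord (b ⊔ b') ⊆ C ∩ C' := fun δ hδ ↦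
    ⟨hbC (closurePoints_anti (fun _ ↦ le_sup_left) hδ),
      hbC' (closurePoints_anti (fun _ ↦ le_sup_right) hδ)⟩
  refine ⟨fun γ hγ ↦ hC.1 hγ.1, fun α hα ↦ ?_, fun δ hδ hlimδ hcof ↦ ⟨?_, ?_⟩⟩
  · obtain ⟨δ, hδ, hαδ⟩ :=
      exists_mem_closurePoints_gt hreg hunc (fun α hα ↦ max_lt (hb α hα) (hb' α hα)) hα
    exact ⟨δ, hsub hδ, hαδ.le⟩
  · exact hC.2.2 δ hδ hlimδ fun α hα ↦ (hcof α hα).imp fun γ h ↦ ⟨h.1.1, h.2⟩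
  · exact hC'.2.2 δ hδ hlimδ fun α hα ↦ (hcof α hα).imp fun γ h ↦ ⟨h.1.2, h.2⟩

theorem IsClubIn.inter_nonempty (hreg : μ.IsRegular) (hunc : ℵ₀ < μ) {C C' : Set Ordinal.{u}}
    (hC : IsClubIn C μ.ord) (hC' : IsClubIn C' μ.ord) : (C ∩ C').Nonempty :=
  (hC.inter hreg hunc hC').nonempty hreg.ord_pos

theorem exists_isClubIn_image_Iio_eq (hreg : μ.IsRegular) (hunc : ℵ₀ < μ) {ζ : Ordinal.{v}}
    {f g : Ordinal.{u} → Ordinal.{v}} (hf : BijOn f (Iio μ.ord) (Iio ζ))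
    (hg : BijOn g (Iio μ.ord) (Iio ζ)) :
    ∃ D, IsClubIn D μ.ord ∧ ∀ γ ∈ D, f '' Iio γ = g '' Iio γ := by
  set b : Ordinal.{u} → Ordinal.{u} := fun ξ ↦
    max (invFunOn g (Iio μ.ord) (f ξ)) (invFunOn f (Iio μ.ord) (g ξ))
  have hb : ∀ ξ < μ.ord, b ξ < μ.ord := fun ξ hξ ↦
    max_lt (invFunOn_mem (hg.surjOn (hf.mapsTo hξ))) (invFunOn_mem (hf.surjOn (hg.mapsTo hξ)))
  refine ⟨closurePoints μ.ord b, isClubIn_closurePoints hreg hunc hb, ?_⟩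
  rintro γ ⟨hγ, -, hcl⟩
  have hIio : Iio γ ⊆ Iio μ.ord := Iio_subset_Iio hγ.le
  exact (image_subset_image_of_invFunOn_mem (hf.mapsTo.mono_left hIio) hg.surjOn
      fun ξ hξ ↦ (le_max_left _ _).trans_lt (hcl ξ hξ)).antisymm
    (image_subset_image_of_invFunOn_mem (hg.mapsTo.mono_left hIio) hf.surjOn
      fun ξ hξ ↦ (le_max_right _ _).trans_lt (hcl ξ hξ))

theorem exists_isClubIn_image_Iio_of_bijOn (hreg : μ.IsRegular) (hunc : ℵ₀ < μ)
    {ζ : Ordinal.{v}} {f g : Ordinal.{u} → Ordinal.{v}} (hf : BijOn f (Iio μ.ord) (Iio ζ))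
    (hg : BijOn g (Iio μ.ord) (Iio ζ)) {P : Set Ordinal.{v} → Prop}
    (h : ∃ C, IsClubIn C μ.ord ∧ ∀ γ ∈ C, P (f '' Iio γ)) :
    ∃ C, IsClubIn C μ.ord ∧ ∀ γ ∈ C, P (g '' Iio γ) := by
  obtain ⟨C, hC, hCP⟩ := h
  obtain ⟨D, hD, hfg⟩ := exists_isClubIn_image_Iio_eq hreg hunc hf hg
  exact ⟨C ∩ D, hC.inter hreg hunc hD, fun γ ⟨hγC, hγD⟩ ↦ hfg γ hγD ▸ hCP γ hγC⟩

end Regular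

theorem stmt_3_general (μ : Cardinal) (hreg : μ.IsRegular) (hunc : Cardinal.aleph0 < μ)
    (ζ : Ordinal)
    (A : Set Ordinal) (f₀ : Ordinal → Ordinal)
    (hf₀ : Set.BijOn f₀ (Set.Iio μ.ord) (Set.Iio ζ))
    (hmem : ζ ∈ A ↔ ∃ C, IsClubIn C μ.ord ∧ ∀ γ ∈ C, otp (f₀ '' Set.Iio γ) ∈ A)
    (hnotmem : ζ ∉ A ↔ ∃ C, IsClubIn C μ.ord ∧ ∀ γ ∈ C, otp (f₀ '' Set.Iio γ) ∉ A) :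
    (ζ ∈ A ↔ ∃ f, Set.BijOn f (Set.Iio μ.ord) (Set.Iio ζ) ∧
        ∃ C, IsClubIn C μ.ord ∧ ∀ γ ∈ C, otp (f '' Set.Iio γ) ∈ A) ∧
    ((∃ f, Set.BijOn f (Set.Iio μ.ord) (Set.Iio ζ) ∧
        ∃ C, IsClubIn C μ.ord ∧ ∀ γ ∈ C, otp (f '' Set.Iio γ) ∈ A) ↔
      (∀ f, Set.BijOn f (Set.Iio μ.ord) (Set.Iio ζ) →
        ∃ C, IsClubIn C μ.ord ∧ ∀ γ ∈ C, otp (f '' Set.Iio γ) ∈ A)) ∧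
    ((∀ f, Set.BijOn f (Set.Iio μ.ord) (Set.Iio ζ) →
        ∃ C, IsClubIn C μ.ord ∧ ∀ γ ∈ C, otp (f '' Set.Iio γ) ∈ A) ↔
      (∀ f, Set.BijOn f (Set.Iio μ.ord) (Set.Iio ζ) →
        ∀ C, IsClubIn C μ.ord → ∃ γ ∈ C, otp (f '' Set.Iio γ) ∈ A)) := by
  have h13 : ζ ∈ A → ∀ f, BijOn f (Iio μ.ord) (Iio ζ) →
      ∃ C, IsClubIn C μ.ord ∧ ∀ γ ∈ C, otp (f '' Iio γ) ∈ A := fun hζ _ hf ↦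
    exists_isClubIn_image_Iio_of_bijOn hreg hunc hf₀ hf (P := (otp · ∈ A)) (hmem.1 hζ)
  have h21 : (∃ f, BijOn f (Iio μ.ord) (Iio ζ) ∧
      ∃ C, IsClubIn C μ.ord ∧ ∀ γ ∈ C, otp (f '' Iio γ) ∈ A) → ζ ∈ A := by
    rintro ⟨f, hf, C, hC, hCA⟩
    by_contra hζ
    obtain ⟨C', hC', hC'A⟩ :=
      exists_isClubIn_image_Iio_of_bijOn hreg hunc hf₀ hf (P := (otp · ∉ A)) (hnotmem.1 hζ)
    obtain ⟨γ, hγC, hγC'⟩ := hC.inter_nonempty hreg hunc hC'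
    exact hC'A γ hγC' (hCA γ hγC)
  have h41 : (∀ f, BijOn f (Iio μ.ord) (Iio ζ) →
      ∀ C, IsClubIn C μ.ord → ∃ γ ∈ C, otp (f '' Iio γ) ∈ A) → ζ ∈ A := by
    intro h4
    by_contra hζ
    obtain ⟨C, hC, hCA⟩ := hnotmem.1 hζ
    obtain ⟨γ, hγC, hγA⟩ := h4 f₀ hf₀ C hC
    exact hCA γ hγC hγA
  refine ⟨⟨fun hζ ↦ ⟨f₀, hf₀, h13 hζ f₀ hf₀⟩, h21⟩,
    ⟨fun h2 ↦ h13 (h21 h2), fun h3 ↦ ⟨f₀, hf₀, h3 f₀ hf₀⟩⟩,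
    fun h3 f hf C hC ↦ ?_, fun h4 ↦ h13 (h41 h4)⟩
  obtain ⟨C', hC', hC'A⟩ := h3 f hf
  obtain ⟨γ, hγC, hγC'⟩ := hC.inter_nonempty hreg hunc hC'
  exact ⟨γ, hγC, hC'A γ hγC'⟩

theorem stmt_3 (μ : Cardinal) (hreg : μ.IsRegular) (hunc : Cardinal.aleph0 < μ)
    (ζ : Ordinal) (hμζ : μ.ord ≤ ζ) (hcard : ζ.card = μ)
    (A : Set Ordinal) (f₀ : Ordinal → Ordinal)
    (hf₀ : Set.BijOn f₀ (Set.Iio μ.ord) (Set.Iio ζ))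
    (hmem : ζ ∈ A ↔ ∃ C, IsClubIn C μ.ord ∧ ∀ γ ∈ C, otp (f₀ '' Set.Iio γ) ∈ A)
    (hnotmem : ζ ∉ A ↔ ∃ C, IsClubIn C μ.ord ∧ ∀ γ ∈ C, otp (f₀ '' Set.Iio γ) ∉ A) :
    (ζ ∈ A ↔ ∃ f, Set.BijOn f (Set.Iio μ.ord) (Set.Iio ζ) ∧
        ∃ C, IsClubIn C μ.ord ∧ ∀ γ ∈ C, otp (f '' Set.Iio γ) ∈ A) ∧
    ((∃ f, Set.BijOn f (Set.Iio μ.ord) (Set.Iio ζ) ∧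
        ∃ C, IsClubIn C μ.ord ∧ ∀ γ ∈ C, otp (f '' Set.Iio γ) ∈ A) ↔
      (∀ f, Set.BijOn f (Set.Iio μ.ord) (Set.Iio ζ) →
        ∃ C, IsClubIn C μ.ord ∧ ∀ γ ∈ C, otp (f '' Set.Iio γ) ∈ A)) ∧
    ((∀ f, Set.BijOn f (Set.Iio μ.ord) (Set.Iio ζ) →
        ∃ C, IsClubIn C μ.ord ∧ ∀ γ ∈ C, otp (f '' Set.Iio γ) ∈ A) ↔
      (∀ f, Set.BijOn f (Set.Iio μ.ord) (Set.Iio ζ) →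
        ∀ C, IsClubIn C μ.ord → ∃ γ ∈ C, otp (f '' Set.Iio γ) ∈ A)) :=
  stmt_3_general μ hreg hunc ζ A f₀ hf₀ hmem hnotmem
end
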